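/- arXiv:1709.06955 — 4 statements merged into one kernel-verified Lean document; each statement's English description precedes it below -/
import Mathlib

section
/- Fix a node u ∈ V and a node v ∈ V with v ≠ u. Let W be a random √c-walk from u. Then the expectation over W of the single-trial estimator s̃_W(v) equals s(u,v), the probability that two independent √c-walks from u and from v meet; i.e., the estimator is unbiased. -/
open scoped BigOperators Classical

variable {V : Type*}

/-- `p` is a possible realization of a `√c`-walk from `u`: it is nonempty,
starts at `u`, and each step moves to an in-neighbor of the current node. -/
def IsWalkFrom (I : V → Finset V) (u : V) (p : List V) : Prop :=
  p.head? = some u ∧ List.Chain' (fun a b => b ∈ I a) p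

/-- The probability that the `√c`-walk from `u` is exactly the finite sequence `p`:
`(1−√c)·∏_{k=1}^{ℓ−1} (√c/|I(u_k)|)` if `p = (u_1,…,u_ℓ)` is a walk from `u`,
and `0` otherwise. -/
noncomputable def walkWeight (I : V → Finset V) (c : ℝ) (u : V) (p : List V) : ℝ :=
  if IsWalkFrom I u p then
    (1 - Real.sqrt c) *
      ∏ k ∈ Finset.range (p.length - 1), Real.sqrt c / ((I (p.getD k u)).card : ℝ)
  else 0

/-- Two finite sequences meet: for some index both sequences are long enough and
their entries at that index coincide. -/
def Meets (w₁ w₂ : List V) : Prop :=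
  ∃ k, k < w₁.length ∧ k < w₂.length ∧ w₁[k]? = w₂[k]?

/-- SimRank `s(u,v)`: the probability that two independent `√c`-walks from `u`
and from `v` meet. -/
noncomputable def simRank (I : V → Finset V) (c : ℝ) (u v : V) : ℝ :=
  ∑' w : List V × List V,
    walkWeight I c u w.1 * walkWeight I c v w.2 * (if Meets w.1 w.2 then 1 else 0)

/-- Deterministic PROBE scores of a reverse path, where `q` is the *reversed*
reverse path, i.e. `q = (u_i, u_{i-1}, …, u_1)` for the reverse path
`(u_1,…,u_i)`: `Score(v,0) = 1` iff `v = u_i`, and `Score(v,j+1) = 0` if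
`v = u_{i-j-1}` (which is `q[j+1]`), else `∑_{x∈I(v)} (√c/|I(v)|)·Score(x,j)`. -/
noncomputable def Score (I : V → Finset V) (c : ℝ) (q : List V) : ℕ → V → ℝ
  | 0, v => if q.head? = some v then 1 else 0
  | j + 1, v =>
      if q[j + 1]? = some v then 0
      else ∑ x ∈ I v, Real.sqrt c / ((I v).card : ℝ) * Score I c q j x

/-- The single-trial estimator `s̃_W(v) = ∑_{i=2}^{ℓ} Score^{(i)}(v, i−1)` for a
fixed sequence `W = p`, where `Score^{(i)}` denotes the PROBE scores of the
prefix `(u_1,…,u_i)`. -/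
noncomputable def estimator (I : V → Finset V) (c : ℝ) (p : List V) (v : V) : ℝ :=
  ∑ i ∈ Finset.Icc 2 p.length, Score I c ((p.take i).reverse) (i - 1) v

/-! For a fixed sequence `W = (u_1, …, u_ℓ)` let `P(W, v)` be the probability that a
`√c`-walk from `v` meets `W`. Conditioning on the first step of that walk gives
`P(u_1 :: W', v) = 1` if `u_1 = v` (a walk from `v` stops almost surely, since every node has
an in-neighbour and `√c < 1`), and `P(u_1 :: W', v) = ∑_{x ∈ I(v)} (√c/|I(v)|) P(W', x)`
otherwise. The PROBE scores summed over all prefixes of `W`, including the one-node prefix,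
satisfy the same recursion, hence equal `P(W, v)`. For `v ≠ u = u_1` the one-node prefix
contributes nothing, so `P(W, v) = s̃_W(v)`, and averaging over `W` (Tonelli in `ℝ≥0∞`)
gives `s(u, v)`. -/

open scoped ENNReal
open Finset

variable {I : V → Finset V} {c : ℝ}

lemma isWalkFrom_iff {u : V} {p : List V} :
    IsWalkFrom I u p ↔ p.head? = some u ∧ p.IsChain (fun a b => b ∈ I a) :=
  Iff.rfl

@[simp]
lemma walkWeight_nil (u : V) : walkWeight I c u [] = 0 := by
  simp [walkWeight, isWalkFrom_iff]

lemma walkWeight_cons_of_ne {u a : V} (h : a ≠ u) (s : List V) :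
    walkWeight I c u (a :: s) = 0 := by
  simp [walkWeight, isWalkFrom_iff, h]

@[simp]
lemma walkWeight_singleton (u : V) : walkWeight I c u [u] = 1 - √c := by
  simp [walkWeight, isWalkFrom_iff]

lemma walkWeight_cons_cons (u x : V) (s : List V) :
    walkWeight I c u (u :: x :: s) =
      if x ∈ I u then √c / (I u).card * walkWeight I c x (x :: s) else 0 := by
  by_cases hx : x ∈ I u
  · have hprod : ∏ k ∈ range s.length, ((I ((x :: s)[k]?.getD u)).card : ℝ) =
        ∏ k ∈ range s.length, ((I ((x :: s)[k]?.getD x)).card : ℝ) :=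
      prod_congr rfl fun k hk => by
        rw [List.getElem?_eq_getElem (by simp at hk ⊢; omega)]; rfl
    by_cases hw : (x :: s).IsChain (fun a b => b ∈ I a)
    · simp [walkWeight, isWalkFrom_iff, hx, hw, prod_range_succ', hprod]
      ring
    · simp [walkWeight, isWalkFrom_iff, hx, hw]
  · simp [walkWeight, isWalkFrom_iff, hx]

lemma walkWeight_nonneg (hc : c ≤ 1) (u : V) (w : List V) : 0 ≤ walkWeight I c u w := by
  unfold walkWeight
  split_ifs
  · have : √c ≤ 1 := Real.sqrt_le_one.mpr hc
    exact mul_nonneg (by linarith) (prod_nonneg fun _ _ => by positivity)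
  · rfl

noncomputable def walkProb (I : V → Finset V) (c : ℝ) (u : V) (w : List V) : ℝ≥0∞ :=
  ENNReal.ofReal (walkWeight I c u w)

lemma walkProb_cons_self (u : V) (t : List V) :
    walkProb I c u (u :: t) = (if t = [] then ENNReal.ofReal (1 - √c) else 0) +
      ∑ x ∈ I u, ENNReal.ofReal (√c / (I u).card) * walkProb I c x t := by
  rcases t with _ | ⟨y, s⟩
  · simp [walkProb]
  · set p := ENNReal.ofReal (√c / (I u).card)
    have hsum : ∑ x ∈ I u, p * walkProb I c x (y :: s) =
        if y ∈ I u then p * walkProb I c y (y :: s) else 0 := by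
      refine (sum_congr rfl fun x _ => ?_).trans
        (sum_ite_eq (I u) y fun x => p * walkProb I c x (y :: s))
      by_cases hxy : y = x
      · simp [hxy]
      · simp [hxy, walkProb, walkWeight_cons_of_ne hxy]
    rw [hsum, if_neg (List.cons_ne_nil y s), zero_add, walkProb, walkWeight_cons_cons]
    split_ifs <;> simp [p, walkProb, ENNReal.ofReal_mul (by positivity : 0 ≤ √c / (I u).card)]

/-- First-step decomposition of an expectation over the walk from `u`. -/
lemma tsum_walkProb_mul (u : V) (F : List V → ℝ≥0∞) :
    ∑' w, walkProb I c u w * F w = ENNReal.ofReal (1 - √c) * F [u] +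
      ∑ x ∈ I u, ENNReal.ofReal (√c / (I u).card) *
        ∑' t, walkProb I c x t * F (u :: t) := by
  have hsupp : (Function.support fun w => walkProb I c u w * F w) ⊆ Set.range (u :: ·) := by
    rintro (_ | ⟨a, t⟩) hw
    · simp [walkProb] at hw
    · by_cases ha : a = u
      · exact ⟨t, by rw [ha]⟩
      · simp [walkProb, walkWeight_cons_of_ne ha] at hw
  rw [← List.cons_injective.tsum_eq hsupp]
  simp only [walkProb_cons_self, add_mul, ENNReal.tsum_add, sum_mul, ite_mul, zero_mul]
  rw [tsum_ite_eq, Summable.tsum_finsetSum fun _ _ => ENNReal.summable]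
  simp only [mul_assoc, ENNReal.tsum_mul_left]

lemma tsum_walkProb_length (hI : ∀ v, (I v).Nonempty) (n : ℕ) (u : V) :
    ∑' w, walkProb I c u w * (if w.length = n + 1 then 1 else 0) =
      ENNReal.ofReal √c ^ n * ENNReal.ofReal (1 - √c) := by
  induction n generalizing u with
  | zero =>
    rw [tsum_walkProb_mul]
    simp [walkProb]
  | succ n ih =>
    rw [tsum_walkProb_mul]
    simp only [List.length_cons, List.length_nil, Nat.add_right_cancel_iff, ih]
    have hcard : ((I u).card : ℝ≥0∞) ≠ 0 := by simp [(hI u).ne_empty]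
    rw [sum_const, nsmul_eq_mul, ← mul_assoc, ← ENNReal.ofReal_natCast,
      ← ENNReal.ofReal_mul (by positivity), mul_div_cancel₀ _ (by exact_mod_cast hcard)]
    simp [pow_succ', mul_assoc]

lemma tsum_walkProb (hI : ∀ v, (I v).Nonempty) (hc : c < 1) (u : V) :
    ∑' w, walkProb I c u w = 1 := by
  have hlength (w : List V) :
      walkProb I c u w = ∑' n : ℕ, walkProb I c u w * (if w.length = n + 1 then 1 else 0) := by
    rcases w with _ | ⟨a, t⟩
    · simp [walkProb]
    · rw [ENNReal.tsum_mul_left, tsum_eq_single t.length (by simp; omega)]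
      simp
  have hgeom : 1 - ENNReal.ofReal √c = ENNReal.ofReal (1 - √c) := by
    rw [ENNReal.ofReal_sub _ (Real.sqrt_nonneg c), ENNReal.ofReal_one]
  rw [tsum_congr hlength, ENNReal.tsum_comm, tsum_congr (tsum_walkProb_length hI · u),
    ENNReal.tsum_mul_right, ENNReal.tsum_geometric, hgeom]
  exact ENNReal.inv_mul_cancel (by simpa using hc) ENNReal.ofReal_ne_top

@[simp]
lemma not_meets_nil_left (w : List V) : ¬Meets [] w := by
  simp [Meets]

@[simp]
lemma not_meets_nil_right (w : List V) : ¬Meets w [] := by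
  simp [Meets]

lemma meets_cons_cons {a b : V} {s t : List V} :
    Meets (a :: s) (b :: t) ↔ a = b ∨ Meets s t := by
  constructor
  · rintro ⟨_ | k, hs, ht, h⟩
    · exact Or.inl (by simpa using h)
    · exact Or.inr ⟨k, by simp_all⟩
  · rintro (rfl | ⟨k, hs, ht, h⟩)
    · exact ⟨0, by simp⟩
    · exact ⟨k + 1, by simpa using hs, by simpa using ht, by simpa using h⟩

noncomputable def meetProb (I : V → Finset V) (c : ℝ) (w : List V) (v : V) : ℝ≥0∞ :=
  ∑' w', walkProb I c v w' * if Meets w w' then 1 else 0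

@[simp]
lemma meetProb_nil (v : V) : meetProb I c [] v = 0 := by
  simp [meetProb]

lemma meetProb_cons (hI : ∀ v, (I v).Nonempty) (hc : c < 1) (a : V) (s : List V) (v : V) :
    meetProb I c (a :: s) v =
      if a = v then 1
      else ∑ x ∈ I v, ENNReal.ofReal (√c / (I v).card) * meetProb I c s x := by
  split_ifs with hav
  · subst hav
    refine (tsum_congr fun w' => ?_).trans (tsum_walkProb hI hc a)
    rcases w' with _ | ⟨b, t⟩
    · simp [walkProb]
    · by_cases hba : b = a
      · simp [meets_cons_cons, hba]
      · simp [walkProb, walkWeight_cons_of_ne hba]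
  · rw [meetProb, tsum_walkProb_mul]
    simp [meets_cons_cons, hav, meetProb]

lemma score_nonneg (q : List V) (j : ℕ) (v : V) : 0 ≤ Score I c q j v := by
  induction j generalizing v with
  | zero => unfold Score; split_ifs <;> norm_num
  | succ j ih =>
    unfold Score
    split_ifs
    · rfl
    · exact sum_nonneg fun x _ => mul_nonneg (by positivity) (ih x)

lemma score_congr {q q' : List V} {j : ℕ} (h : ∀ m ≤ j, q[m]? = q'[m]?) (v : V) :
    Score I c q j v = Score I c q' j v := by
  induction j generalizing v with
  | zero => simp only [Score, List.head?_eq_getElem?, h 0 le_rfl]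
  | succ j ih =>
    simp only [Score, h (j + 1) le_rfl, ih fun m hm => h m (by omega)]

@[simp]
lemma score_take_one_reverse (a : V) (s : List V) (v : V) :
    Score I c ((a :: s).take 1).reverse 0 v = if a = v then 1 else 0 := by
  simp [Score]

lemma score_take_reverse_succ {s : List V} {k : ℕ} (hk : k < s.length) (a v : V) :
    Score I c ((a :: s).take (k + 2)).reverse (k + 1) v =
      if a = v then 0
      else ∑ x ∈ I v, √c / (I v).card * Score I c (s.take (k + 1)).reverse k x := by
  rw [List.take_succ_cons, List.reverse_cons, Score]
  set l := (s.take (k + 1)).reverse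
  have hlen : l.length = k + 1 := by simp [l]; omega
  have hprefix : ∀ m ≤ k, (l ++ [a])[m]? = l[m]? := fun m hm =>
    List.getElem?_append_left (by omega)
  rw [← hlen, List.getElem?_concat_length]
  simp only [Option.some.injEq, score_congr hprefix]

/-- `∑_{i=1}^{ℓ} Score^{(i)}(v, i−1)`: the estimator with the `i = 1` term included. -/
noncomputable def probeSum (I : V → Finset V) (c : ℝ) (w : List V) (v : V) : ℝ :=
  ∑ k ∈ range w.length, Score I c (w.take (k + 1)).reverse k v

lemma probeSum_nonneg (w : List V) (v : V) : 0 ≤ probeSum I c w v :=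
  sum_nonneg fun _ _ => score_nonneg _ _ _

lemma probeSum_cons (a : V) (s : List V) (v : V) :
    probeSum I c (a :: s) v =
      if a = v then 1 else ∑ x ∈ I v, √c / (I v).card * probeSum I c s x := by
  have hsucc : ∀ k ∈ range s.length,
      Score I c ((a :: s).take (k + 1 + 1)).reverse (k + 1) v =
        if a = v then 0
        else ∑ x ∈ I v, √c / (I v).card * Score I c (s.take (k + 1)).reverse k x :=
    fun k hk => score_take_reverse_succ (mem_range.mp hk) a v
  rw [probeSum, List.length_cons, sum_range_succ', sum_congr rfl hsucc, score_take_one_reverse]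
  split_ifs
  · simp
  · simp only [probeSum, mul_sum, add_zero]
    exact sum_comm

lemma estimator_eq_probeSum {a v : V} (h : a ≠ v) (s : List V) :
    estimator I c (a :: s) v = probeSum I c (a :: s) v := by
  rw [estimator, probeSum, List.length_cons, sum_range_succ', score_take_one_reverse, if_neg h,
    add_zero, ← Ico_add_one_right_eq_Icc, sum_Ico_eq_sum_range]
  exact sum_congr (by simp) fun k _ => by rw [Nat.add_comm 2 k]; rfl

lemma meetProb_eq_ofReal_probeSum (hI : ∀ v, (I v).Nonempty) (hc : c < 1)
    (w : List V) (v : V) :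
    meetProb I c w v = ENNReal.ofReal (probeSum I c w v) := by
  induction w generalizing v with
  | nil => simp [probeSum]
  | cons a s ih =>
    rw [meetProb_cons hI hc, probeSum_cons]
    split_ifs
    · simp
    · rw [ENNReal.ofReal_sum_of_nonneg fun x _ =>
        mul_nonneg (by positivity) (probeSum_nonneg s x)]
      exact sum_congr rfl fun x _ => by rw [ih, ENNReal.ofReal_mul (by positivity)]

lemma tsum_eq_toReal_tsum_ofReal {α : Type*} {f : α → ℝ} (hf : ∀ a, 0 ≤ f a) :
    ∑' a, f a = (∑' a, ENNReal.ofReal (f a)).toReal := by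
  rw [ENNReal.tsum_toReal_eq fun _ => ENNReal.ofReal_ne_top]
  exact tsum_congr fun a => (ENNReal.toReal_ofReal (hf a)).symm

theorem estimator_unbiased_general
    (I : V → Finset V) (hI : ∀ v, (I v).Nonempty)
    (c : ℝ) (hc1 : c < 1)
    (u v : V) (hv : v ≠ u) :
    ∑' w : List V, walkWeight I c u w * estimator I c w v = simRank I c u v := by
  have hweight := walkWeight_nonneg (I := I) hc1.le
  have hestimator (w : List V) :
      ENNReal.ofReal (walkWeight I c u w * estimator I c w v) =
        walkProb I c u w * meetProb I c w v := by
    rcases w with _ | ⟨a, s⟩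
    · simp [walkProb]
    · by_cases hau : a = u
      · subst hau
        rw [ENNReal.ofReal_mul (hweight _ _), estimator_eq_probeSum hv.symm,
          meetProb_eq_ofReal_probeSum hI hc1, walkProb]
      · simp [walkProb, walkWeight_cons_of_ne hau]
  have hpair (p : List V × List V) :
      ENNReal.ofReal
          (walkWeight I c u p.1 * walkWeight I c v p.2 * if Meets p.1 p.2 then 1 else 0) =
        walkProb I c u p.1 * (walkProb I c v p.2 * if Meets p.1 p.2 then 1 else 0) := by
    split_ifs <;> simp [walkProb, ENNReal.ofReal_mul (hweight _ _)]
  rw [simRank, tsum_eq_toReal_tsum_ofReal, tsum_eq_toReal_tsum_ofReal, tsum_congr hestimator,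
    tsum_congr hpair, ENNReal.tsum_prod']
  · simp only [meetProb, ENNReal.tsum_mul_left]
  · intro p
    exact mul_nonneg (mul_nonneg (hweight _ _) (hweight _ _)) (by split_ifs <;> norm_num)
  · exact fun w => mul_nonneg (hweight _ _) (sum_nonneg fun _ _ => score_nonneg _ _ _)

/-- Lemma 3.1: the single-trial estimator is unbiased: for `v ≠ u`, the
expectation of `s̃_W(v)` over a random `√c`-walk `W` from `u` equals `s(u,v)`,
the probability that two independent `√c`-walks from `u` and from `v` meet. -/
theorem estimator_unbiased [Fintype V]
    (I : V → Finset V) (hI : ∀ v, (I v).Nonempty)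
    (c : ℝ) (hc0 : 0 < c) (hc1 : c < 1)
    (u v : V) (hv : v ≠ u) :
    ∑' w : List V, walkWeight I c u w * estimator I c w v = simRank I c u v :=
  estimator_unbiased_general I hI c hc1 u v hv
end

section
/- Let W = (u_1,…,u_ℓ) be a fixed sequence with u_{k+1} ∈ I(u_k), let ε_t > 0, and let ℓ_t be a positive integer with (√c)^{ℓ_t} ≤ ε_t. Let W' = (u_1,…,u_{min(ℓ,ℓ_t)}) be the walk truncated at step ℓ_t. Then for every node v ∈ V with v ≠ u_1, 0 ≤ s̃_W(v) − s̃_{W'}(v) ≤ ε_t; equivalently, 0 ≤ ∑_{i=ℓ_t+1}^{ℓ} Score^{(i)}(v,i−1) ≤ ε_t. -/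
open scoped BigOperators Classical

variable {V : Type*}

lemma Score_nonneg (I : V → Finset V) {c : ℝ} (q : List V) :
    ∀ j (v : V), 0 ≤ Score I c q j v := by
  intro j
  induction j with
  | zero =>
    intro v; rw [Score]
    split <;> norm_num
  | succ j ih =>
    intro v; rw [Score]
    split
    · exact le_rfl
    · exact Finset.sum_nonneg fun x _ => mul_nonneg
        (div_nonneg (Real.sqrt_nonneg c) (by positivity)) (ih x)

lemma rev_take_getElem? (p : List V) {i k : ℕ} (hi : i ≤ p.length) (hk : k < i) :
    ((p.take i).reverse)[i - 1 - k]? = p[k]? := by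
  have hlen : (p.take i).length = i := by
    rw [List.length_take]; omega
  rw [List.getElem?_reverse (by omega), hlen, List.getElem?_take]
  have : i - 1 - (i - 1 - k) = k := by omega
  rw [this, if_pos hk]

/-- Key tail bound: downward induction. -/
lemma tail_bound (I : V → Finset V) (hI : ∀ v, (I v).Nonempty)
    {c : ℝ} (hc0 : 0 < c) (hc1 : c < 1) (p : List V) (a : ℕ) :
    ∀ m k, p.length ≤ k + m → ∀ v : V,
      ∑ i ∈ Finset.Icc (max (a + 1) (k + 1)) p.length,
        Score I c ((p.take i).reverse) (i - 1 - k) v ≤ Real.sqrt c ^ (a - k) := by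
  have hs0 : (0:ℝ) ≤ Real.sqrt c := Real.sqrt_nonneg c
  have hs1 : Real.sqrt c ≤ 1 := by
    rw [show (1:ℝ) = Real.sqrt 1 by simp]
    exact Real.sqrt_le_sqrt hc1.le
  have hpow_nonneg : ∀ n : ℕ, (0:ℝ) ≤ Real.sqrt c ^ n := fun n => pow_nonneg hs0 n
  intro m
  induction m with
  | zero =>
    intro k hk v
    rw [Finset.Icc_eq_empty (by omega), Finset.sum_empty]
    exact hpow_nonneg _
  | succ m ih =>
    intro k hk v
    by_cases hkl : p.length ≤ k
    · rw [Finset.Icc_eq_empty (by omega), Finset.sum_empty]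
      exact hpow_nonneg _
    push_neg at hkl
    -- head?/getElem? facts for indices in the sum
    have hhead : ∀ i ∈ Finset.Icc (max (a + 1) (k + 1)) p.length,
        i = k + 1 → ((p.take i).reverse).head? = p[k]? := by
      intro i hi hik
      rw [Finset.mem_Icc] at hi
      rw [List.head?_eq_getElem?]
      have : (0:ℕ) = i - 1 - k := by omega
      rw [this, rev_take_getElem? p hi.2 (by omega)]
    have hget : ∀ i ∈ Finset.Icc (max (a + 1) (k + 1)) p.length,
        k + 2 ≤ i → ((p.take i).reverse)[i - 1 - k]? = p[k]? := by
      intro i hi hik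
      rw [Finset.mem_Icc] at hi
      exact rev_take_getElem? p hi.2 (by omega)
    by_cases hvk : p[k]? = some v
    · -- v is on the path at position k: terms for i ≥ k+2 vanish;
      -- the i = k+1 term is 1 and occurs only if a ≤ k.
      calc ∑ i ∈ Finset.Icc (max (a + 1) (k + 1)) p.length,
              Score I c ((p.take i).reverse) (i - 1 - k) v
          ≤ ∑ i ∈ Finset.Icc (max (a + 1) (k + 1)) p.length,
              (if i = k + 1 then (fun _ : ℕ => (1:ℝ)) i else 0) := by
            apply Finset.sum_le_sum
            intro i hi
            have hi' := Finset.mem_Icc.mp hi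
            by_cases hik : i = k + 1
            · rw [if_pos hik]
              have h0 : i - 1 - k = 0 := by omega
              rw [h0, Score]
              split <;> norm_num
            · rw [if_neg hik]
              have hik2 : k + 2 ≤ i := by omega
              have hlev : i - 1 - k = (i - 2 - k) + 1 := by omega
              rw [hlev, Score, if_pos]
              have : i - 2 - k + 1 = i - 1 - k := by omega
              rw [this, hget i hi hik2, hvk]
        _ ≤ Real.sqrt c ^ (a - k) := by
            rw [Finset.sum_ite_eq']
            split
            · rename_i hmem
              have := (Finset.mem_Icc.mp hmem).1
              have hak : a ≤ k := by omega
              have : a - k = 0 := by omega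
              rw [this, pow_zero]
            · exact hpow_nonneg _
    · -- v avoids position k: unroll one step and use the IH at k+1.
      have hsub : Finset.Icc (max (a + 1) (k + 2)) p.length ⊆
          Finset.Icc (max (a + 1) (k + 1)) p.length := by
        apply Finset.Icc_subset_Icc_left; omega
      have hdrop : ∑ i ∈ Finset.Icc (max (a + 1) (k + 1)) p.length,
            Score I c ((p.take i).reverse) (i - 1 - k) v
          = ∑ i ∈ Finset.Icc (max (a + 1) (k + 2)) p.length,
            Score I c ((p.take i).reverse) (i - 1 - k) v := by
        refine (Finset.sum_subset hsub ?_).symm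
        intro i hi hni
        have hi' := Finset.mem_Icc.mp hi
        have hik : i = k + 1 := by
          simp only [Finset.mem_Icc] at hni; omega
        have h0 : i - 1 - k = 0 := by omega
        rw [h0, Score, hhead i hi hik, if_neg hvk]
      rw [hdrop]
      have hunroll : ∀ i ∈ Finset.Icc (max (a + 1) (k + 2)) p.length,
          Score I c ((p.take i).reverse) (i - 1 - k) v
            = ∑ x ∈ I v, Real.sqrt c / ((I v).card : ℝ) *
                Score I c ((p.take i).reverse) (i - 1 - (k + 1)) x := by
        intro i hi
        have hi' := Finset.mem_Icc.mp hi
        have hik2 : k + 2 ≤ i := by omega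
        have hlev : i - 1 - k = (i - 2 - k) + 1 := by omega
        rw [hlev, Score, if_neg]
        · have : i - 2 - k = i - 1 - (k + 1) := by omega
          rw [this]
        · have : i - 2 - k + 1 = i - 1 - k := by omega
          rw [this, hget i (hsub hi) hik2]
          exact hvk
      rw [Finset.sum_congr rfl hunroll, Finset.sum_comm]
      have hcard : (0:ℝ) < ((I v).card : ℝ) := by
        exact_mod_cast Finset.card_pos.mpr (hI v)
      calc ∑ x ∈ I v, ∑ i ∈ Finset.Icc (max (a + 1) (k + 2)) p.length,
              Real.sqrt c / ((I v).card : ℝ) *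
                Score I c ((p.take i).reverse) (i - 1 - (k + 1)) x
          ≤ ∑ x ∈ I v, Real.sqrt c / ((I v).card : ℝ) * Real.sqrt c ^ (a - (k + 1)) := by
            apply Finset.sum_le_sum
            intro x _
            rw [← Finset.mul_sum]
            apply mul_le_mul_of_nonneg_left _ (div_nonneg hs0 hcard.le)
            have := ih (k + 1) (by omega) x
            simpa using this
        _ = Real.sqrt c * Real.sqrt c ^ (a - (k + 1)) := by
            rw [Finset.sum_const, nsmul_eq_mul]
            field_simp
        _ = Real.sqrt c ^ (a - (k + 1) + 1) := by ring
        _ ≤ Real.sqrt c ^ (a - k) :=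
            pow_le_pow_of_le_one hs0 hs1 (by omega)

/-- Pruning Rule 1 (walk truncation) error bound: for a fixed sequence
`W = p = (u_1,…,u_ℓ)` with `u_{k+1} ∈ I(u_k)`, `ε_t > 0`, and a positive
integer `ℓ_t` with `(√c)^{ℓ_t} ≤ ε_t`, truncating the walk at step `ℓ_t`
(i.e. taking `W' = (u_1,…,u_{min(ℓ,ℓ_t)})`) changes the single-trial estimator
of any `v ≠ u_1` by at most `ε_t`, and only downwards:
`0 ≤ s̃_W(v) − s̃_{W'}(v) ≤ ε_t`. -/
theorem truncation_error [Fintype V]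
    (I : V → Finset V) (hI : ∀ v, (I v).Nonempty)
    (c : ℝ) (hc0 : 0 < c) (hc1 : c < 1)
    (p : List V) (hchain : List.Chain' (fun a b => b ∈ I a) p)
    (εt : ℝ) (hεt : 0 < εt)
    (ℓt : ℕ) (hℓt : 0 < ℓt) (hpow : Real.sqrt c ^ ℓt ≤ εt)
    (v : V) (hv : p.head? ≠ some v) :
    0 ≤ estimator I c p v - estimator I c (p.take ℓt) v ∧
      estimator I c p v - estimator I c (p.take ℓt) v ≤ εt := by
  classical
  set b := min ℓt p.length with hb
  have htrunc : estimator I c (p.take ℓt) v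
      = ∑ i ∈ Finset.Icc 2 b, Score I c ((p.take i).reverse) (i - 1) v := by
    unfold estimator
    rw [List.length_take]
    apply Finset.sum_congr rfl
    intro i hi
    have hi' := Finset.mem_Icc.mp hi
    have : (p.take ℓt).take i = p.take i := by
      rw [List.take_take]
      congr 1
      omega
    rw [this]
  have hdiff : estimator I c p v - estimator I c (p.take ℓt) v
      = ∑ i ∈ Finset.Ioc b p.length, Score I c ((p.take i).reverse) (i - 1) v := by
    rcases Nat.eq_zero_or_pos p.length with h0 | h0
    · have hb0 : b = 0 := by omega
      rw [htrunc, hb0, h0]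
      simp [estimator, h0]
    · have h1b : 1 ≤ b := by omega
      have hbl : b ≤ p.length := by omega
      rw [htrunc]
      unfold estimator
      have h2 : (2:ℕ) = 1 + 1 := rfl
      rw [show Finset.Icc 2 p.length = Finset.Ioc 1 p.length from Finset.Icc_add_one_left_eq_Ioc 1 _,
          show Finset.Icc 2 b = Finset.Ioc 1 b from Finset.Icc_add_one_left_eq_Ioc 1 _,
          ← Finset.sum_Ioc_consecutive _ h1b hbl]
      ring
  constructor
  · rw [hdiff]
    exact Finset.sum_nonneg fun i _ => Score_nonneg I _ _ v
  · rw [hdiff]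
    rcases le_or_gt p.length ℓt with hle | hlt
    · have : b = p.length := by omega
      rw [this]
      simpa using hεt.le
    · have hbℓ : b = ℓt := by omega
      have key := tail_bound I hI hc0 hc1 p ℓt p.length 0 (by omega) v
      have hIcc : Finset.Icc (max (ℓt + 1) (0 + 1)) p.length = Finset.Ioc b p.length := by
        rw [hbℓ]
        rw [show max (ℓt + 1) (0 + 1) = ℓt + 1 by omega]
        exact Finset.Icc_add_one_left_eq_Ioc ℓt _
      rw [hIcc] at key
      simp only [Nat.sub_zero] at key
      calc ∑ i ∈ Finset.Ioc b p.length, Score I c ((p.take i).reverse) (i - 1) v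
          ≤ Real.sqrt c ^ ℓt := key
        _ ≤ εt := hpow
end

section
/- Let W = (u_1,…,u_ℓ) be a fixed sequence with u_{k+1} ∈ I(u_k). Then for every node x ∈ V and every integer d with 0 ≤ d ≤ ℓ−1, the diagonal sum of PROBE scores satisfies ∑_{j=0}^{d} Score^{(ℓ−d+j)}(x,j) ≤ 1, where Score^{(i)} denotes the deterministic PROBE scores of the prefix (u_1,…,u_i). -/
open scoped BigOperators Classical

variable {V : Type*}

/-- Claim 1 in the appendix proof of the truncation-error lemma: for a fixed
sequence `W = p = (u_1,…,u_ℓ)` with `u_{k+1} ∈ I(u_k)`, every node `x` and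
every `0 ≤ d ≤ ℓ−1`, the diagonal sum of PROBE scores satisfies
`∑_{j=0}^{d} Score^{(ℓ−d+j)}(x,j) ≤ 1`, where `Score^{(i)}` denotes the PROBE
scores of the prefix `(u_1,…,u_i)`. -/
theorem diagonal_score_sum_le_one [Fintype V]
    (I : V → Finset V) (hI : ∀ v, (I v).Nonempty)
    (c : ℝ) (hc0 : 0 < c) (hc1 : c < 1)
    (p : List V) (hchain : List.Chain' (fun a b => b ∈ I a) p) (hp : p ≠ [])
    (x : V) (d : ℕ) (hd : d ≤ p.length - 1) :
    ∑ j ∈ Finset.range (d + 1),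
        Score I c ((p.take (p.length - d + j)).reverse) j x ≤ 1 := by
  induction d generalizing x with
  | zero =>
    rw [Finset.sum_range_one]
    simp only [Score]
    split <;> norm_num
  | succ d ih =>
    have hpl : 0 < p.length := List.length_pos_iff.mpr hp
    have hlen : d + 2 ≤ p.length := by omega
    set m := p.length - (d + 1) with hm
    have hm1 : 1 ≤ m := by omega
    have hmd : m + (d + 1) = p.length := by omega
    -- the condition node is `p[m-1]?`
    have hcond : ∀ j ≤ d, ((p.take (m + (j + 1))).reverse)[j + 1]? = p[m - 1]? := by
      intro j hj
      have hlt : j + 1 < (p.take (m + (j + 1))).length := by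
        rw [List.length_take]; omega
      rw [List.getElem?_reverse hlt, List.length_take]
      have h1 : min (m + (j + 1)) p.length - 1 - (j + 1) = m - 1 := by omega
      rw [h1, List.getElem?_take, if_pos (by omega)]
    have hhead : ((p.take m).reverse).head? = p[m - 1]? := by
      rw [List.head?_reverse, List.getLast?_eq_getElem?, List.length_take]
      have h1 : min m p.length - 1 = m - 1 := by omega
      rw [h1, List.getElem?_take, if_pos (by omega)]
    have hsplit :
        ∑ j ∈ Finset.range (d + 1 + 1),
            Score I c ((p.take (p.length - (d + 1) + j)).reverse) j x
          = (∑ j ∈ Finset.range (d + 1),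
              Score I c ((p.take (m + (j + 1))).reverse) (j + 1) x)
            + Score I c ((p.take m).reverse) 0 x := by
      rw [Finset.sum_range_succ']
      simp only [← hm, Nat.add_zero]
    rw [hsplit]
    by_cases hx : p[m - 1]? = some x
    · have h0 : Score I c ((p.take m).reverse) 0 x = 1 := by
        simp only [Score]; rw [if_pos (hhead.trans hx)]
      have hz : ∀ j ∈ Finset.range (d + 1),
          Score I c ((p.take (m + (j + 1))).reverse) (j + 1) x = 0 := by
        intro j hj
        simp only [Finset.mem_range] at hj
        simp only [Score]
        rw [if_pos ((hcond j (by omega)).trans hx)]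
      rw [Finset.sum_congr rfl hz, h0]
      simp
    · have h0 : Score I c ((p.take m).reverse) 0 x = 0 := by
        simp only [Score]; rw [if_neg (hhead ▸ hx)]
      rw [h0, add_zero]
      have hun : ∀ j ∈ Finset.range (d + 1),
          Score I c ((p.take (m + (j + 1))).reverse) (j + 1) x
            = ∑ y ∈ I x, Real.sqrt c / ((I x).card : ℝ)
                * Score I c ((p.take (m + (j + 1))).reverse) j y := by
        intro j hj
        simp only [Finset.mem_range] at hj
        simp only [Score]
        rw [if_neg ((hcond j (by omega)) ▸ hx)]
      rw [Finset.sum_congr rfl hun, Finset.sum_comm]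
      have hIH : ∀ y : V,
          ∑ j ∈ Finset.range (d + 1),
            Score I c ((p.take (m + (j + 1))).reverse) j y ≤ 1 := by
        intro y
        have := ih y (by omega)
        have harg : ∀ j, p.length - d + j = m + (j + 1) := by intro j; omega
        simpa only [harg] using this
      have hn : 0 < ((I x).card : ℝ) := by
        exact_mod_cast Finset.card_pos.mpr (hI x)
      have hcc : 0 ≤ Real.sqrt c / ((I x).card : ℝ) :=
        div_nonneg (Real.sqrt_nonneg c) hn.le
      calc ∑ y ∈ I x, ∑ j ∈ Finset.range (d + 1),
              Real.sqrt c / ((I x).card : ℝ)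
                * Score I c ((p.take (m + (j + 1))).reverse) j y
          = ∑ y ∈ I x, Real.sqrt c / ((I x).card : ℝ)
              * ∑ j ∈ Finset.range (d + 1),
                  Score I c ((p.take (m + (j + 1))).reverse) j y := by
            simp [Finset.mul_sum]
        _ ≤ ∑ y ∈ I x, Real.sqrt c / ((I x).card : ℝ) * 1 :=
            Finset.sum_le_sum fun y _ =>
              mul_le_mul_of_nonneg_left (hIH y) hcc
        _ = Real.sqrt c := by
            rw [Finset.sum_const, nsmul_eq_mul, mul_one]
            field_simp
        _ ≤ 1 := Real.sqrt_le_one.mpr hc1.le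
end

section
/- Let (u_1,…,u_i) be a reverse path with i ≥ 2 and consider the randomized PROBE process for (u_1,…,u_i). Then for every node v ∈ V, Pr[v ∈ S_{i−1}] = Score(v, i−1), the deterministic PROBE score of v for the reverse path (u_1,…,u_i) (equivalently, the first-meeting probability of v with respect to (u_1,…,u_i)). -/
/-! The set `S_j` is determined by the samples of iterations `< j`, so the sample
`(X_{j,v}, B_{j,v})` deciding whether `v` enters `S_{j+1}` is independent of `S_j`. Hence
`Pr[v ∈ S_{j+1}] = [v ≠ u_{i-j-1}] · ∑_{x ∈ I(v)} (√c/|I(v)|) · Pr[x ∈ S_j]`, which is the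
recursion defining `Score`, and induction on `j` gives the claim. -/

open scoped BigOperators Classical

variable {V : Type*}

/-- Weight of an outcome of the randomized PROBE process with `m` iterations:
for each iteration `j` and node `v`, the outcome records the uniformly sampled
in-neighbor `X_{j,v}` of `v` and the Bernoulli(`√c`) coin `B_{j,v}`, with all
these random variables mutually independent. -/
noncomputable def probeWeight [Fintype V] (I : V → Finset V) (c : ℝ) {m : ℕ}
    (ω : Fin m × V → V × Bool) : ℝ :=
  ∏ jv : Fin m × V,
    (if (ω jv).1 ∈ I jv.2 then 1 / ((I jv.2).card : ℝ) else 0) *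
      (if (ω jv).2 then Real.sqrt c else 1 - Real.sqrt c)

/-- The random sets of the randomized PROBE process for the reverse path
`(u_1,…,u_i)`, where `q` is the reversed reverse path: `S_0 = {u_i}` and, for
`0 ≤ j ≤ i−2`, `S_{j+1} = {v : v ≠ u_{i−j−1}, X_{j,v} ∈ S_j, B_{j,v} = true}`
(note `u_{i−j−1} = q[j+1]`). -/
def randSet (I : V → Finset V) (q : List V) {m : ℕ}
    (ω : Fin m × V → V × Bool) : ℕ → Set V
  | 0 => {v | q.head? = some v}
  | j + 1 =>
      {v | q[j + 1]? ≠ some v ∧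
        ∃ h : j < m, (ω (⟨j, h⟩, v)).1 ∈ randSet I q ω j ∧ (ω (⟨j, h⟩, v)).2 = true}

open Function

theorem Fintype.sum_prod_mul_apply_mul_of_update_eq {ι β R : Type*} [Fintype ι] [DecidableEq ι]
    [Fintype β] [CommSemiring R] (w : ι → β → R) (a : ι) (hw : ∑ b, w a b = 1) (g : β → R)
    (F : (ι → β) → R) (hF : ∀ ω b, F (update ω a b) = F ω) :
    ∑ ω, (∏ i, w i (ω i)) * (g (ω a) * F ω)
      = (∑ b, w a b * g b) * ∑ ω, (∏ i, w i (ω i)) * F ω := by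
  set e := Equiv.funSplitAt a β
  have split (Φ : (ι → β) → R) : ∑ ω, Φ ω = ∑ b, ∑ ρ, Φ (e.symm (b, ρ)) := by
    rw [← e.symm.sum_comp, Fintype.sum_prod_type]
  have apply_self (b ρ) : e.symm (b, ρ) a = b := by simp [e]
  have weight (b ρ) : ∏ i, w i (e.symm (b, ρ) i) = w a b * ∏ j : {j // j ≠ a}, w j (ρ j) := by
    rw [Fintype.prod_eq_mul_prod_subtype_ne _ a, apply_self]
    congr 1
    exact Fintype.prod_congr _ _ fun j => by simp [e, j.2]
  set C : β → R := fun b => ∑ ρ, (∏ j : {j // j ≠ a}, w j (ρ j)) * F (e.symm (b, ρ))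
  have hC (b b') : C b = C b' := by
    refine Fintype.sum_congr _ _ fun ρ => ?_
    have : e.symm (b, ρ) = update (e.symm (b', ρ)) a b := by
      ext i
      by_cases hi : i = a
      · subst hi; simp [apply_self]
      · simp [e, hi]
    rw [this, hF]
  have expand (h : β → R) :
      ∑ ω, (∏ i, w i (ω i)) * (h (ω a) * F ω) = ∑ b, w a b * h b * C b := by
    rw [split]
    refine Fintype.sum_congr _ _ fun b => ?_
    simp only [C, Finset.mul_sum, weight, apply_self]
    exact Fintype.sum_congr _ _ fun ρ => by ring
  have total : ∑ ω, (∏ i, w i (ω i)) * F ω = ∑ b, w a b * C b := by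
    simpa using expand 1
  rw [expand, total, Finset.sum_mul]
  refine Fintype.sum_congr _ _ fun b => ?_
  rw [Fintype.sum_congr _ _ fun b' => congrArg (w a b' * ·) (hC b' b), ← Finset.sum_mul, hw,
    one_mul]

noncomputable def probeFactor (I : V → Finset V) (c : ℝ) (v : V) (b : V × Bool) : ℝ :=
  (if b.1 ∈ I v then 1 / ((I v).card : ℝ) else 0) *
    (if b.2 then Real.sqrt c else 1 - Real.sqrt c)

theorem probeWeight_eq_prod_probeFactor [Fintype V] (I : V → Finset V) (c : ℝ) {m : ℕ}
    (ω : Fin m × V → V × Bool) :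
    probeWeight I c ω = ∏ jv : Fin m × V, probeFactor I c jv.2 (ω jv) := rfl

theorem sum_probeFactor [Fintype V] {I : V → Finset V} {v : V} (hI : (I v).Nonempty) (c : ℝ) :
    ∑ b : V × Bool, probeFactor I c v b = 1 := by
  have hcard : ((I v).card : ℝ) ≠ 0 := by exact_mod_cast (hI.card_pos).ne'
  calc ∑ b : V × Bool, probeFactor I c v b
      = (∑ x, if x ∈ I v then 1 / ((I v).card : ℝ) else 0) *
          ∑ t : Bool, if t then Real.sqrt c else 1 - Real.sqrt c := by
        rw [Finset.sum_mul_sum, Fintype.sum_prod_type]; rfl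
    _ = 1 := by simp [Finset.sum_ite_mem, hcard]

theorem sum_probeWeight [Fintype V] {I : V → Finset V} (hI : ∀ v, (I v).Nonempty) (c : ℝ)
    (m : ℕ) : ∑ ω : Fin m × V → V × Bool, probeWeight I c ω = 1 := by
  simp only [probeWeight_eq_prod_probeFactor, ← Fintype.prod_sum, sum_probeFactor (hI _),
    Finset.prod_const_one]

theorem randSet_update_of_le (I : V → Finset V) (q : List V) {m : ℕ}
    (ω : Fin m × V → V × Bool) {j : Fin m} (w : V) (b : V × Bool) {k : ℕ} (hk : k ≤ j) :
    randSet I q (update ω (j, w) b) k = randSet I q ω k := by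
  induction k with
  | zero => rfl
  | succ k ih =>
    have hne (h : k < m) (v : V) : ((⟨k, h⟩ : Fin m), v) ≠ (j, w) := fun he => by
      have := congrArg (fun p => (p.1 : ℕ)) he
      simp only at this
      omega
    ext v
    simp only [randSet, Set.mem_ofPred_eq, ih (by omega)]
    exact and_congr_right fun _ => exists_congr fun h => by rw [update_of_ne (hne h v)]

theorem indicator_mem_randSet_succ [Fintype V] (I : V → Finset V) (q : List V) {m k : ℕ} {x : V}
    (hq : q[k + 1]? ≠ some x) (hk : k < m) (ω : Fin m × V → V × Bool) :
    (if x ∈ randSet I q ω (k + 1) then (1 : ℝ) else 0)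
      = ∑ y, (if ω (⟨k, hk⟩, x) = (y, true) then 1 else 0) *
          (if y ∈ randSet I q ω k then 1 else 0) := by
  rcases hω : ω (⟨k, hk⟩, x) with ⟨y₀, t⟩
  cases t
  · simp [randSet, hω]
  · simp only [Prod.mk.injEq, and_true, ite_mul, one_mul, zero_mul, Finset.sum_ite_eq,
      Finset.mem_univ, if_true]
    simp [randSet, hq, hk, hω]

theorem sum_probeWeight_mul_indicator_randSet [Fintype V] {I : V → Finset V}
    (hI : ∀ v, (I v).Nonempty) (c : ℝ) (q : List V) {m k : ℕ} (hk : k ≤ m) (x : V) :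
    ∑ ω : Fin m × V → V × Bool, probeWeight I c ω * (if x ∈ randSet I q ω k then 1 else 0)
      = Score I c q k x := by
  induction k generalizing x with
  | zero =>
    have start (ω : Fin m × V → V × Bool) :
        (if x ∈ randSet I q ω 0 then (1 : ℝ) else 0) = Score I c q 0 x := by
      rw [Score]
      exact if_congr Iff.rfl rfl rfl
    simp only [start, ← Finset.sum_mul, sum_probeWeight hI, one_mul]
  | succ k ih =>
    by_cases hq : q[k + 1]? = some x
    · simp [randSet, Score, hq]
    set a : Fin m × V := (⟨k, hk⟩, x)
    have indicator := indicator_mem_randSet_succ I q hq hk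
    have step (y : V) :
        ∑ ω : Fin m × V → V × Bool, probeWeight I c ω *
            ((if ω a = (y, true) then 1 else 0) * (if y ∈ randSet I q ω k then 1 else 0))
          = probeFactor I c x (y, true) * Score I c q k y := by
      have hF (ω : Fin m × V → V × Bool) (b : V × Bool) :
          (if y ∈ randSet I q (update ω a b) k then (1 : ℝ) else 0)
            = if y ∈ randSet I q ω k then 1 else 0 := by
        rw [randSet_update_of_le I q ω x b le_rfl]
      have := Fintype.sum_prod_mul_apply_mul_of_update_eq
        (fun jv : Fin m × V => probeFactor I c jv.2) a (sum_probeFactor (hI x) c) (fun b => if b = (y, true) then 1 else 0)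
        (fun ω => if y ∈ randSet I q ω k then 1 else 0) hF
      refine this.trans ?_
      rw [← ih (by omega) y]
      congr 1
      simp [a]
    calc _ = ∑ y, ∑ ω : Fin m × V → V × Bool, probeWeight I c ω *
            ((if ω a = (y, true) then 1 else 0) * (if y ∈ randSet I q ω k then 1 else 0)) := by
          simp only [indicator, Finset.mul_sum]
          exact Finset.sum_comm
      _ = Score I c q (k + 1) x := by
          simp only [step]
          simp only [Score, hq, if_false, probeFactor, if_true, ite_mul, zero_mul,
            Finset.sum_ite_mem, Finset.univ_inter]
          exact Finset.sum_congr rfl fun _ _ => by ring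

theorem randomized_probe_correct_general [Fintype V]
    (I : V → Finset V) (hI : ∀ v, (I v).Nonempty)
    (c : ℝ)
    (p : List V)
    (v : V) :
    ∑ ω : Fin (p.length - 1) × V → V × Bool,
        probeWeight I c ω *
          (if v ∈ randSet I p.reverse ω (p.length - 1) then 1 else 0)
      = Score I c p.reverse (p.length - 1) v :=
  sum_probeWeight_mul_indicator_randSet hI c p.reverse le_rfl v

/-- Lemma B.2 (correctness of the randomized PROBE algorithm): for a reverse
path `p = (u_1,…,u_i)` with `i ≥ 2` and every node `v`, the probability that
`v` is selected into `S_{i−1}` by the randomized PROBE process equals the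
deterministic PROBE score `Score(v,i−1)` (the first-meeting probability of `v`
with respect to `(u_1,…,u_i)`). -/
theorem randomized_probe_correct [Fintype V]
    (I : V → Finset V) (hI : ∀ v, (I v).Nonempty)
    (c : ℝ) (hc0 : 0 < c) (hc1 : c < 1)
    (p : List V) (hchain : List.Chain' (fun a b => b ∈ I a) p) (hlen : 2 ≤ p.length)
    (v : V) :
    ∑ ω : Fin (p.length - 1) × V → V × Bool,
        probeWeight I c ω *
          (if v ∈ randSet I p.reverse ω (p.length - 1) then 1 else 0)
      = Score I c p.reverse (p.length - 1) v :=
  randomized_probe_correct_general I hI c p v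
end
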